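/- Let I ⊆ ℝ be an open interval, let γ : I → ℝ² be a C¹ curve parametrized by arc length with unit tangent τ(s) = γ'(s), and let n : I → ℝ² be a differentiable map of unit vectors with τ(s) = (−n₂(s), n₁(s)) and n'(s) = κ(s) τ(s) for a function κ : I → ℝ. Let v : ℝ² → ℝ² be C¹ with v(γ(s)) · n(s) = 0 for all s ∈ I. Then for each s ∈ I, the Navier boundary condition with α = 2κ, namely 2 (D(v)(γ(s)) n(s)) · τ(s) + 2κ(s) (v(γ(s)) · τ(s)) = 0, holds if and only if the Lions boundary condition ω(v)(γ(s)) = 0 holds. -/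

import Mathlib

noncomputable section

/-- Dot product on `ℝ²` (realized as `Fin 2 → ℝ`). -/
def dot2 (u w : Fin 2 → ℝ) : ℝ := u 0 * w 0 + u 1 * w 1

/-- Vorticity `ω(v)(x) = ∂₁v²(x) − ∂₂v¹(x)` (components indexed `0,1`). -/
def vort (v : (Fin 2 → ℝ) → Fin 2 → ℝ) (x : Fin 2 → ℝ) : ℝ :=
  fderiv ℝ v x (Pi.single 0 1) 1 - fderiv ℝ v x (Pi.single 1 1) 0

/-- Rate-of-strain tensor `D(v)(x) = ½(Dv(x) + Dv(x)ᵀ)`, acting on a vector `u`. -/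
def strain (v : (Fin 2 → ℝ) → Fin 2 → ℝ) (x u : Fin 2 → ℝ) : Fin 2 → ℝ :=
  fun i => (1 / 2) * (fderiv ℝ v x u i + dot2 (fun j => fderiv ℝ v x (Pi.single i 1) j) u)

/-!
Differentiating the tangency condition `v(γ(s)) · n(s) = 0` along the curve gives
`(Dv τ) · n = -κ (v · τ)`. On the other hand, for a positively oriented orthonormal frame `(n, τ)`,
`2 D(v) n · τ = (Dv n) · τ + (Dv τ) · n` and `(Dv n) · τ - (Dv τ) · n = ω(v)`. Together these give
the identity `2 D(v) n · τ + 2κ (v · τ) = ω(v)` on the curve, of which the equivalence is a restatement.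
-/

lemma ContinuousLinearMap.apply_fin_two (L : (Fin 2 → ℝ) →L[ℝ] (Fin 2 → ℝ)) (u : Fin 2 → ℝ)
    (i : Fin 2) : L u i = u 0 * L (Pi.single 0 1) i + u 1 * L (Pi.single 1 1) i := by
  have hu : u = u 0 • (Pi.single 0 1 : Fin 2 → ℝ) + u 1 • (Pi.single 1 1 : Fin 2 → ℝ) := by
    funext j; fin_cases j <;> simp
  conv_lhs => rw [hu]
  simp [smul_eq_mul]

lemma HasDerivAt.dot2 {f g : ℝ → Fin 2 → ℝ} {f' g' : Fin 2 → ℝ} {s : ℝ}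
    (hf : HasDerivAt f f' s) (hg : HasDerivAt g g' s) :
    HasDerivAt (fun t => dot2 (f t) (g t)) (dot2 f' (g s) + dot2 (f s) g') s := by
  rw [hasDerivAt_pi] at hf hg
  refine (((hf 0).mul (hg 0)).add ((hf 1).mul (hg 1))).congr_deriv ?_
  simp only [_root_.dot2]
  ring

lemma two_mul_dot2_strain_eq_vort_add (v : (Fin 2 → ℝ) → Fin 2 → ℝ) (x n : Fin 2 → ℝ)
    (hn : dot2 n n = 1) :
    2 * dot2 (strain v x n) ![-(n 1), n 0] =
      vort v x + 2 * dot2 (fderiv ℝ v x ![-(n 1), n 0]) n := by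
  simp only [strain, vort, dot2] at hn ⊢
  set L := fderiv ℝ v x
  rw [L.apply_fin_two n 0, L.apply_fin_two n 1, L.apply_fin_two ![-(n 1), n 0] 0,
    L.apply_fin_two ![-(n 1), n 0] 1]
  simp only [Matrix.cons_val_zero, Matrix.cons_val_one]
  linear_combination (L (Pi.single 0 1) 1 - L (Pi.single 1 1) 0) * hn

lemma dot2_fderiv_tangent_normal_eq {γ τ n : ℝ → Fin 2 → ℝ} {κ : ℝ → ℝ}
    {v : (Fin 2 → ℝ) → Fin 2 → ℝ} {s : ℝ} (hγ : HasDerivAt γ (τ s) s)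
    (hn' : HasDerivAt n (κ s • τ s) s) (hv : DifferentiableAt ℝ v (γ s))
    (htang : ∀ᶠ t in nhds s, dot2 (v (γ t)) (n t) = 0) :
    dot2 (fderiv ℝ v (γ s) (τ s)) (n s) = -(κ s * dot2 (v (γ s)) (τ s)) := by
  have hderiv := (hv.hasFDerivAt.comp_hasDerivAt s hγ).dot2 hn'
  have hzero := (hasDerivAt_const s (0 : ℝ)).congr_of_eventuallyEq htang
  have := hderiv.unique hzero
  simp only [Function.comp_apply, dot2, Pi.smul_apply, smul_eq_mul] at this ⊢
  linear_combination this

theorem navier_two_kappa_iff_lions_general (a b : ℝ) (γ τ n : ℝ → Fin 2 → ℝ) (κ : ℝ → ℝ)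
    (v : (Fin 2 → ℝ) → Fin 2 → ℝ)
    (hγ : ∀ s ∈ Set.Ioo a b, HasDerivAt γ (τ s) s)
    (hnunit : ∀ s ∈ Set.Ioo a b, dot2 (n s) (n s) = 1)
    (hτdef : ∀ s ∈ Set.Ioo a b, τ s = ![-(n s 1), n s 0])
    (hn' : ∀ s ∈ Set.Ioo a b, HasDerivAt n (κ s • τ s) s)
    (hv : ContDiff ℝ 1 v)
    (htang : ∀ s ∈ Set.Ioo a b, dot2 (v (γ s)) (n s) = 0) :
    ∀ s ∈ Set.Ioo a b,
      (2 * dot2 (strain v (γ s) (n s)) (τ s) + 2 * κ s * dot2 (v (γ s)) (τ s) = 0 ↔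
        vort v (γ s) = 0) := by
  intro s hs
  have hnormal : dot2 (fderiv ℝ v (γ s) (τ s)) (n s) = -(κ s * dot2 (v (γ s)) (τ s)) :=
    dot2_fderiv_tangent_normal_eq (hγ s hs) (hn' s hs) (hv.differentiable one_ne_zero _)
      (Filter.eventually_of_mem (isOpen_Ioo.mem_nhds hs) htang)
  have hstrain := two_mul_dot2_strain_eq_vort_add v (γ s) (n s) (hnunit s hs)
  rw [← hτdef s hs, hnormal] at hstrain
  rw [hstrain]
  constructor <;> intro h <;> linarith

/-- Along a `C¹` arc-length curve `γ` in the open interval `(a,b)`, with unit normal `n`,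
positively-oriented tangent `τ = (−n₂, n₁) = γ'` and `n' = κ τ`, for a `C¹` vector field `v`
tangent to the curve, the Navier boundary condition with `α = 2κ`, namely
`2 (D(v) n) ⬝ τ + 2κ (v ⬝ τ) = 0`, holds at `γ(s)` iff the Lions condition `ω(v)(γ(s)) = 0` holds. -/
theorem navier_two_kappa_iff_lions (a b : ℝ) (γ τ n : ℝ → Fin 2 → ℝ) (κ : ℝ → ℝ)
    (v : (Fin 2 → ℝ) → Fin 2 → ℝ)
    (hγ : ∀ s ∈ Set.Ioo a b, HasDerivAt γ (τ s) s)
    (hτcont : ContinuousOn τ (Set.Ioo a b))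
    (hτunit : ∀ s ∈ Set.Ioo a b, dot2 (τ s) (τ s) = 1)
    (hnunit : ∀ s ∈ Set.Ioo a b, dot2 (n s) (n s) = 1)
    (hτdef : ∀ s ∈ Set.Ioo a b, τ s = ![-(n s 1), n s 0])
    (hn' : ∀ s ∈ Set.Ioo a b, HasDerivAt n (κ s • τ s) s)
    (hv : ContDiff ℝ 1 v)
    (htang : ∀ s ∈ Set.Ioo a b, dot2 (v (γ s)) (n s) = 0) :
    ∀ s ∈ Set.Ioo a b,
      (2 * dot2 (strain v (γ s) (n s)) (τ s) + 2 * κ s * dot2 (v (γ s)) (τ s) = 0 ↔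
        vort v (γ s) = 0) :=
  navier_two_kappa_iff_lions_general a b γ τ n κ v hγ hnunit hτdef hn' hv htang

end
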